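/- Let d ≥ 1 be an integer and let 0 < α_1 < α_2 < ⋯ < α_d < π be real numbers. Then the determinant of the d × d matrix whose (i,j) entry is sin(i·α_j) equals 2^{d(d-1)/2} · (∏_{j=1}^{d} sin α_j) · ∏_{1 ≤ i < j ≤ d} (cos α_j - cos α_i). -/

import Mathlib

/-! Since `sin ((n + 1) θ) = sin θ · Uₙ(cos θ)` with `Uₙ` the Chebyshev polynomial of the second
kind, pulling `sin αⱼ` out of every column leaves the matrix `(Uᵢ(cos αⱼ))`. As `Uᵢ` has degree `i`
and leading coefficient `2ⁱ`, this matrix is the Vandermonde matrix of the `cos αⱼ` times a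
triangular matrix with diagonal `(2ⁱ)`. -/

open Finset Polynomial Polynomial.Chebyshev

namespace Matrix

variable {R : Type*} [CommRing R] {n : ℕ}

theorem det_matrixOfPolynomials_eq_prod_coeff (p : Fin n → R[X])
    (h_deg : ∀ i, (p i).natDegree ≤ i) :
    (of fun i j : Fin n => (p j).coeff i).det = ∏ i, (p i).coeff i :=
  det_of_isUpperTriangular (matrixOfPolynomials_blockTriangular p h_deg)

theorem det_eval_matrixOfPolynomials (v : Fin n → R) (p : Fin n → R[X])
    (h_deg : ∀ i, (p i).natDegree ≤ i) :
    (of fun i j => (p i).eval (v j)).det =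
      (∏ i, (p i).coeff i) * ∏ i, ∏ j ∈ Ioi i, (v j - v i) := by
  rw [← det_transpose,
    show (of fun i j => (p i).eval (v j))ᵀ = of fun i j => (p j).eval (v i) from rfl,
    eval_matrixOfPolynomials_eq_vandermonde_mul_matrixOfPolynomials v p h_deg, det_mul,
    det_vandermonde, det_matrixOfPolynomials_eq_prod_coeff p h_deg, mul_comm]

end Matrix

theorem Polynomial.Chebyshev.coeff_U_natCast_self (R : Type*) [CommRing R] [IsDomain R]
    [NeZero (2 : R)] (n : ℕ) : (U R n).coeff n = 2 ^ n := by
  rw [← leadingCoeff_U_natCast R n, leadingCoeff, natDegree_U_natCast]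

theorem Real.sin_natCast_succ_mul (n : ℕ) (θ : ℝ) :
    Real.sin ((n + 1 : ℕ) * θ) = Real.sin θ * (U ℝ n).eval (Real.cos θ) := by
  rw [mul_comm (Real.sin θ), U_real_cos]
  push_cast
  rfl

theorem Fin.prod_pow_val {M : Type*} [CommMonoid M] (a : M) (n : ℕ) :
    ∏ i : Fin n, a ^ (i : ℕ) = a ^ (n * (n - 1) / 2) := by
  rw [prod_pow_eq_pow_sum, Fin.sum_univ_eq_sum_range (fun i => i) n, sum_range_id]

open Finset in
theorem det_sin_matrix_vandermonde_form_general
    (d : ℕ)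
    (α : Fin d → ℝ) :
    Matrix.det (Matrix.of fun i j : Fin d => Real.sin ((i.1 + 1 : ℕ) * α j))
      = 2 ^ (d * (d - 1) / 2) * (∏ j, Real.sin (α j)) *
        ∏ i, ∏ j ∈ Ioi i, (Real.cos (α j) - Real.cos (α i)) := by
  have h_deg (i : Fin d) : (U ℝ (i : ℕ)).natDegree ≤ i := (natDegree_U_natCast ℝ i).le
  calc Matrix.det (Matrix.of fun i j : Fin d => Real.sin ((i.1 + 1 : ℕ) * α j))
      = Matrix.det (Matrix.of fun i j : Fin d =>
          Real.sin (α j) * (U ℝ (i : ℕ)).eval (Real.cos (α j))) := by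
        simp only [Real.sin_natCast_succ_mul]
    _ = (∏ j, Real.sin (α j)) * ((∏ i : Fin d, (U ℝ (i : ℕ)).coeff i) *
          ∏ i, ∏ j ∈ Ioi i, (Real.cos (α j) - Real.cos (α i))) :=
        (Matrix.det_mul_row _
          (Matrix.of fun i j : Fin d => (U ℝ (i : ℕ)).eval (Real.cos (α j)))).trans
          (congrArg _ (Matrix.det_eval_matrixOfPolynomials _ _ h_deg))
    _ = _ := by
        simp only [coeff_U_natCast_self, Fin.prod_pow_val]
        ring

open Finset in
theorem det_sin_matrix_vandermonde_form
    (d : ℕ) (hd : 1 ≤ d)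
    (α : Fin d → ℝ) (hα_mono : StrictMono α)
    (hα_pos : ∀ i, 0 < α i) (hα_lt : ∀ i, α i < Real.pi) :
    Matrix.det (Matrix.of fun i j : Fin d => Real.sin ((i.1 + 1 : ℕ) * α j))
      = 2 ^ (d * (d - 1) / 2) * (∏ j, Real.sin (α j)) *
        ∏ i, ∏ j ∈ Ioi i, (Real.cos (α j) - Real.cos (α i)) :=
  det_sin_matrix_vandermonde_form_general d α
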